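/- Let Q be a Hermitian d×d matrix with simple eigenvalue q_k, let β < 0, and λ_k := q_k − β². If λ_k < q₁ (the smallest eigenvalue of Q), then det(β·I − M(λ_k)) = 0 where M(λ) = −√(Q − λ·I), and the kernel of β·I − M(λ_k) is one-dimensional (spanned by the eigenvector of Q for q_k). -/

import Mathlib

/-!
Both matrices in the statement are functions of `Q` in the sense of the continuous
functional calculus: `Q - λₖ • 1 = f(Q)` with `f x = x - λₖ`, which is positive on the
spectrum of `Q`, and `β • 1 + √(Q - λₖ • 1) = g(Q)` with `g x = β + √(x - λₖ)`. In an
eigenbasis of `Q` the matrix `g(Q)` is diagonal with entries `g(qᵢ)`, so its kernel has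
dimension `#{i | g(qᵢ) = 0}`. Since `β < 0`, `g(qᵢ) = 0` iff `qᵢ - λₖ = β²`, i.e. iff
`qᵢ = qₖ`, and simplicity leaves only `i = k`.
-/

open Matrix ComplexOrder

namespace Matrix.PosSemidef

/-- The positive semidefinite square root, as defined in Mathlib (December 2024), since removed. -/
noncomputable def sqrt {n 𝕜 : Type*} [Fintype n] [RCLike 𝕜] [DecidableEq n] {A : Matrix n n 𝕜}
    (hA : A.PosSemidef) : Matrix n n 𝕜 :=
  (hA.1.eigenvectorUnitary : Matrix n n 𝕜) * diagonal ((↑) ∘ (√·) ∘ hA.1.eigenvalues) *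
    (star hA.1.eigenvectorUnitary : Matrix n n 𝕜)

end Matrix.PosSemidef

namespace Matrix

theorem det_eq_zero_of_finrank_ker_pos {n K : Type*} [Fintype n] [DecidableEq n] [Field K]
    {M : Matrix n n K} (h : 0 < Module.finrank K (LinearMap.ker (toLin' M))) : M.det = 0 := by
  rw [← LinearMap.det_toLin', LinearMap.det_eq_zero_iff_ker_ne_bot]
  intro hbot
  rw [hbot, finrank_bot] at h
  exact h.false

variable {n 𝕜 : Type*} [Fintype n] [DecidableEq n] [RCLike 𝕜] {A : Matrix n n 𝕜}

theorem PosSemidef.sqrt_eq_cfc (hA : A.PosSemidef) : hA.sqrt = cfc Real.sqrt A := by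
  rw [hA.isHermitian.cfc_eq]
  rfl

namespace IsHermitian

open scoped MatrixOrder in
theorem posDef_cfc (hA : A.IsHermitian) {f : ℝ → ℝ} (hf : ∀ i, 0 < f (hA.eigenvalues i)) :
    (cfc f A).PosDef := by
  rw [← isStrictlyPositive_iff_posDef,
    cfc_isStrictlyPositive_iff f A (A.finite_real_spectrum.continuousOn f),
    hA.spectrum_real_eq_range_eigenvalues]
  rintro _ ⟨i, rfl⟩
  exact hf i

theorem rank_cfc (hA : A.IsHermitian) (f : ℝ → ℝ) :
    (cfc f A).rank = Fintype.card {i // f (hA.eigenvalues i) ≠ 0} := by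
  rw [hA.cfc_eq, IsHermitian.cfc, Unitary.conjStarAlgAut_apply, ← Unitary.coe_star]
  simp [-isUnit_iff_ne_zero, -Unitary.coe_star, rank_diagonal]

theorem finrank_ker_cfc (hA : A.IsHermitian) (f : ℝ → ℝ) :
    Module.finrank 𝕜 (LinearMap.ker (toLin' (cfc f A))) =
      Fintype.card {i // f (hA.eigenvalues i) = 0} := by
  have rank_nullity := LinearMap.finrank_range_add_finrank_ker (toLin' (cfc f A))
  rw [Module.finrank_fintype_fun_eq_card] at rank_nullity
  change (cfc f A).rank + _ = _ at rank_nullity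
  have card_zeros := Fintype.card_subtype_compl fun i => f (hA.eigenvalues i) ≠ 0
  simp only [not_not] at card_zeros
  rw [hA.rank_cfc] at rank_nullity
  omega

end IsHermitian

end Matrix

/-- If q_k is a simple eigenvalue of the Hermitian matrix Q, β < 0 and
λ_k = q_k − β² lies below the spectrum of Q, then det(β·I − M(λ_k)) = 0
with M(λ) = −√(Q − λ·I), and ker(β·I − M(λ_k)) is one-dimensional. -/
theorem simple_eigenvalue_branch_point (d : ℕ) (Q : Matrix (Fin d) (Fin d) ℂ)
    (hQ : Q.IsHermitian) (k : Fin d)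
    (hsimple : ∀ j, hQ.eigenvalues j = hQ.eigenvalues k → j = k)
    (β : ℝ) (hβ : β < 0)
    (lamk : ℝ) (hlamk : lamk = hQ.eigenvalues k - β ^ 2)
    (hbelow : ∀ i, lamk < hQ.eigenvalues i) :
    ∃ hpd : (Q - (lamk : ℂ) • (1 : Matrix (Fin d) (Fin d) ℂ)).PosDef,
      ((β : ℂ) • (1 : Matrix (Fin d) (Fin d) ℂ) - (-hpd.posSemidef.sqrt)).det = 0 ∧
      Module.finrank ℂ
        (LinearMap.ker (Matrix.toLin'
          ((β : ℂ) • (1 : Matrix (Fin d) (Fin d) ℂ) - (-hpd.posSemidef.sqrt)))) = 1 := by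
  have hshift : Q - (lamk : ℂ) • 1 = cfc (fun x : ℝ => x - lamk) Q := by
    rw [cfc_sub .., cfc_id' .., cfc_const .., Algebra.algebraMap_eq_smul_one, ← Complex.coe_smul]
  have hpd : (Q - (lamk : ℂ) • 1).PosDef := by
    rw [hshift]
    exact hQ.posDef_cfc fun i => sub_pos.2 (hbelow i)
  refine ⟨hpd, ?_⟩
  have hM : (β : ℂ) • 1 - -hpd.posSemidef.sqrt = cfc (fun x => β + √(x - lamk)) Q := by
    rw [sub_neg_eq_add, hpd.posSemidef.sqrt_eq_cfc, hshift, ← cfc_comp' .., cfc_const_add ..,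
      Algebra.algebraMap_eq_smul_one, ← Complex.coe_smul]
  have hzero : ∀ i, β + √(hQ.eigenvalues i - lamk) = 0 ↔ i = k := by
    intro i
    rw [add_eq_zero_iff_eq_neg',
      Real.sqrt_eq_iff_eq_sq (sub_pos.2 (hbelow i)).le (neg_nonneg.2 hβ.le), neg_sq, hlamk]
    exact ⟨fun h => hsimple i (by linarith), fun h => by rw [h]; ring⟩
  have hker :
      Module.finrank ℂ (LinearMap.ker (toLin' (cfc (fun x => β + √(x - lamk)) Q))) = 1 := by
    rw [hQ.finrank_ker_cfc]
    simp only [hzero]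
    exact Fintype.card_subtype_eq k
  rw [hM]
  exact ⟨det_eq_zero_of_finrank_ker_pos (hker ▸ Nat.one_pos), hker⟩
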